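/- arXiv:2303.02228 — 11 statements merged into one kernel-verified Lean document; each statement's English description precedes it below -/
import Mathlib

section
/- Let k have characteristic 2 and G be the Lie algebra with basis {a,b,c}, [a,b]=c, [a,c]=a, [b,c]=b. Then G is a simple Lie algebra. -/
/-- The 3-dimensional Lie algebra over an algebraically closed field of
characteristic 2 with brackets [a,b]=c, [a,c]=a, [b,c]=b is simple:
it is nonabelian and its only ideals are 0 and the whole algebra. -/
theorem restricted_jordan_char2_lie_simple
    (k : Type*) [Field k] [IsAlgClosed k] [CharP k 2] :
    let br : (Fin 3 → k) → (Fin 3 → k) → (Fin 3 → k) := fun x y =>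
      ![x 0 * y 2 + x 2 * y 0, x 1 * y 2 + x 2 * y 1, x 0 * y 1 + x 1 * y 0]
    (∃ x y, br x y ≠ 0) ∧
    (∀ I : Submodule k (Fin 3 → k),
      (∀ x ∈ I, ∀ y : Fin 3 → k, br y x ∈ I) → I = ⊥ ∨ I = ⊤) := by
  intro br
  have hbr : ∀ x y : Fin 3 → k, br x y =
      ![x 0 * y 2 + x 2 * y 0, x 1 * y 2 + x 2 * y 1, x 0 * y 1 + x 1 * y 0] :=
    fun _ _ => rfl
  constructor
  · refine ⟨![1,0,0], ![0,1,0], ?_⟩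
    rw [hbr]
    intro h
    have h2 := congrFun h 2
    simp at h2
  · intro I hI
    by_cases hbot : I = ⊥
    · exact Or.inl hbot
    right
    obtain ⟨x, hxI, hx0⟩ : ∃ x ∈ I, x ≠ 0 := by
      by_contra h
      push_neg at h
      exact hbot ((Submodule.eq_bot_iff I).2 h)
    -- First show e2 = ![0,0,1] ∈ I
    have he2 : (![0,0,1] : Fin 3 → k) ∈ I := by
      by_cases h0 : x 0 ≠ 0
      · have k1 := hI x hxI ![0,1,0]
        rw [hbr] at k1
        simp at k1
        -- k1 : ![0, x 2, x 0] ∈ I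
        have k2 := hI _ k1 ![0,0,1]
        rw [hbr] at k2
        simp at k2
        -- k2 : ![0, x 2, 0] ∈ I
        have k3 := I.sub_mem k1 k2
        have hsub : (![0, x 2, x 0] - ![0, x 2, 0] : Fin 3 → k) = ![0, 0, x 0] := by
          funext i; fin_cases i <;> simp
        rw [hsub] at k3
        have k4 := I.smul_mem (x 0)⁻¹ k3
        have hsc : (x 0)⁻¹ • (![0, 0, x 0] : Fin 3 → k) = ![0,0,1] := by
          funext i; fin_cases i <;> simp [inv_mul_cancel₀ h0]
        rwa [hsc] at k4
      · push_neg at h0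
        by_cases h1 : x 1 ≠ 0
        · have k1 := hI x hxI ![1,0,0]
          rw [hbr] at k1
          simp at k1
          -- k1 : ![x 2, 0, x 1] ∈ I
          have k2 := hI _ k1 ![0,0,1]
          rw [hbr] at k2
          simp at k2
          -- k2 : ![x 2, 0, 0] ∈ I
          have k3 := I.sub_mem k1 k2
          have hsub : (![x 2, 0, x 1] - ![x 2, 0, 0] : Fin 3 → k) = ![0, 0, x 1] := by
            funext i; fin_cases i <;> simp
          rw [hsub] at k3
          have k4 := I.smul_mem (x 1)⁻¹ k3
          have hsc : (x 1)⁻¹ • (![0, 0, x 1] : Fin 3 → k) = ![0,0,1] := by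
            funext i; fin_cases i <;> simp [inv_mul_cancel₀ h1]
          rwa [hsc] at k4
        · push_neg at h1
          have h2 : x 2 ≠ 0 := by
            intro h2
            apply hx0
            funext i; fin_cases i <;> simp [h0, h1, h2]
          have hx : (![0,0,1] : Fin 3 → k) = (x 2)⁻¹ • x := by
            funext i; fin_cases i <;> simp [h0, h1, inv_mul_cancel₀ h2]
          rw [hx]
          exact I.smul_mem _ hxI
    have he0 : (![1,0,0] : Fin 3 → k) ∈ I := by
      have k1 := hI _ he2 ![1,0,0]
      rw [hbr] at k1
      simpa using k1
    have he1 : (![0,1,0] : Fin 3 → k) ∈ I := by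
      have k1 := hI _ he2 ![0,1,0]
      rw [hbr] at k1
      simpa using k1
    refine (Submodule.eq_top_iff').2 fun v => ?_
    have hv : v = v 0 • ![1,0,0] + v 1 • ![0,1,0] + v 2 • ![0,0,1] := by
      funext i; fin_cases i <;> simp
    rw [hv]
    exact I.add_mem (I.add_mem (I.smul_mem _ he0) (I.smul_mem _ he1)) (I.smul_mem _ he2)
end

section
/- In the algebra U = u(m) (characteristic 2, generated by a,b,c with ab+ba=c, ac+ca=a, bc+cb=b, a⁴=0, b⁴=0, c²=c), the relations b²a² = a²b² + c, ca² = a²c, and cb² = b²c hold. -/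
/-- In the algebra u(m) over a field of characteristic 2, the relations
b²a² = a²b² + c, ca² = a²c and cb² = b²c hold. -/
theorem um_rel_squares (k : Type*) [Field k] [CharP k 2]
    (U : Type*) [Ring U] [Algebra k U] (a b c : U)
    (hab : a*b + b*a = c) (hac : a*c + c*a = a) (hbc : b*c + c*b = b)
    (ha4 : a^4 = 0) (hb4 : b^4 = 0) (hc2 : c^2 = c) :
    b^2*a^2 = a^2*b^2 + c ∧ c*a^2 = a^2*c ∧ c*b^2 = b^2*c := by
  have h2 : (2 : U) = 0 := by
    have h : (2 : k) = 0 := by exact_mod_cast CharP.cast_eq_zero k 2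
    rw [← map_ofNat (algebraMap k U) 2, h, map_zero]
  have hx : ∀ x : U, x + x = 0 := fun x => by rw [← two_mul, h2, zero_mul]
  have hneg : ∀ x : U, -x = x := fun x => neg_eq_of_add_eq_zero_left (hx x)
  have hca : c*a = a*c + a := by
    have := eq_sub_of_add_eq' hac
    rw [this, sub_eq_add_neg, hneg, add_comm]
  have hcb : c*b = b*c + b := by
    have := eq_sub_of_add_eq' hbc
    rw [this, sub_eq_add_neg, hneg, add_comm]
  have hba : b*a = a*b + c := by
    have := eq_sub_of_add_eq' hab
    rw [this, sub_eq_add_neg, hneg, add_comm]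
  have hca2 : c*a^2 = a^2*c := by
    calc c*a^2 = (a*c + a)*a := by rw [pow_two, ← mul_assoc, hca]
      _ = a*(c*a) + a*a := by noncomm_ring
      _ = a*(a*c) + (a*a + a*a) := by rw [hca]; noncomm_ring
      _ = a^2*c := by rw [hx, add_zero, pow_two, mul_assoc]
  have hcb2 : c*b^2 = b^2*c := by
    calc c*b^2 = (b*c + b)*b := by rw [pow_two, ← mul_assoc, hcb]
      _ = b*(c*b) + b*b := by noncomm_ring
      _ = b*(b*c) + (b*b + b*b) := by rw [hcb]; noncomm_ring
      _ = b^2*c := by rw [hx, add_zero, pow_two, mul_assoc]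
  have hb2a : b^2*a = a*b^2 + b := by
    calc b^2*a = b*(b*a) := by rw [pow_two, mul_assoc]
      _ = b*(a*b) + b*c := by rw [hba, mul_add]
      _ = (b*a)*b + b*c := by noncomm_ring
      _ = (a*b)*b + (c*b + b*c) := by rw [hba]; noncomm_ring
      _ = a*b^2 + (b*c + c*b) := by rw [pow_two, mul_assoc, add_comm (c*b)]
      _ = a*b^2 + b := by rw [hbc]
  refine ⟨?_, hca2, hcb2⟩
  calc b^2*a^2 = b^2*a*a := by rw [pow_two a]; noncomm_ring
    _ = (a*b^2 + b)*a := by rw [hb2a]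
    _ = a*(b^2*a) + b*a := by noncomm_ring
    _ = a*(a*b^2) + (a*b + (a*b + c)) := by rw [hb2a, hba]; noncomm_ring
    _ = a*(a*b^2) + ((a*b + a*b) + c) := by rw [add_assoc, ← add_assoc (a*b)]
    _ = a^2*b^2 + c := by rw [hx, zero_add, pow_two a, mul_assoc]
end

section
/- In the algebra U = u(m) (characteristic 2), the identities a = a²b + ba² and b = b²a + ab² hold. Consequently, on any U-module on which a² acts as zero, the elements a, b, and c all act as zero. -/
/-- In u(m) (characteristic 2) the identities a = a²b + ba² and b = b²a + ab² hold.
Consequently, on any u(m)-module on which a² acts as zero, a, b and c act as zero. -/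
theorem um_a_eq_and_trivial_action (k : Type*) [Field k] [CharP k 2]
    (U : Type*) [Ring U] [Algebra k U] (a b c : U)
    (hab : a*b + b*a = c) (hac : a*c + c*a = a) (hbc : b*c + c*b = b)
    (ha4 : a^4 = 0) (hb4 : b^4 = 0) (hc2 : c^2 = c) :
    (a = a^2*b + b*a^2 ∧ b = b^2*a + a*b^2) ∧
    (∀ (V : Type*) [AddCommGroup V] [Module k V] (ρ : U →ₐ[k] Module.End k V),
      ρ (a^2) = 0 → ρ a = 0 ∧ ρ b = 0 ∧ ρ c = 0) := by
  have h2 : ∀ x : U, x + x = 0 := by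
    intro x
    have h := two_smul k x
    rw [show ((2:k)) = 0 from CharP.cast_eq_zero k 2] at h
    simpa using h.symm
  have hA : a = a^2*b + b*a^2 := by
    calc a = a*c + c*a := hac.symm
      _ = a*(a*b+b*a) + (a*b+b*a)*a := by rw [hab]
      _ = a^2*b + b*a^2 + (a*b*a + a*b*a) := by noncomm_ring
      _ = a^2*b + b*a^2 := by rw [h2, add_zero]
  have hB : b = b^2*a + a*b^2 := by
    calc b = b*c + c*b := hbc.symm
      _ = b*(a*b+b*a) + (a*b+b*a)*b := by rw [hab]
      _ = b^2*a + a*b^2 + (b*a*b + b*a*b) := by noncomm_ring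
      _ = b^2*a + a*b^2 := by rw [h2, add_zero]
  refine ⟨⟨hA, hB⟩, ?_⟩
  intro V _ _ ρ ha2
  have hra : ρ a = 0 := by
    have : ρ a = ρ (a^2*b + b*a^2) := by rw [← hA]
    rw [map_add, map_mul, map_mul, ha2] at this
    simpa using this
  have hrb : ρ b = 0 := by
    have : ρ b = ρ (b^2*a + a*b^2) := by rw [← hB]
    rw [map_add, map_mul, map_mul, hra] at this
    simpa using this
  have hrc : ρ c = 0 := by
    have : ρ c = ρ (a*b + b*a) := by rw [hab]
    rw [map_add, map_mul, map_mul, hra, hrb] at this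
    simpa using this
  exact ⟨hra, hrb, hrc⟩
end

section
/- Let k be a field of characteristic 2 and U = u(m) as above. Then every 2-dimensional U-module is trivial, i.e., a, b, c act as zero. -/
/-!
In characteristic 2, `tr C = tr (AB + BA) = 2 tr (AB) = 0`. The trace of an idempotent is its
rank, so an idempotent with trace zero on a space of dimension at most `char k` has rank `0` or
full rank, i.e. `C = 0` or `C = 1`. In both cases `X = XC + CX` forces `X = 0` (as `X + X = 0`),
so `A = B = 0`, and then `C = AB + BA = 0`.
-/

open Module LinearMap

theorem LinearMap.trace_mul_add_mul_eq_zero {R M : Type*} [CommRing R] [CharP R 2]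
    [AddCommGroup M] [Module R M] [Module.Free R M] [Module.Finite R M] (f g : Module.End R M) :
    trace R M (f * g + g * f) = 0 := by
  rw [map_add, trace_mul_comm R g f, CharTwo.add_self_eq_zero]

theorem IsIdempotentElem.eq_zero_or_eq_one_of_trace_eq_zero {k V : Type*} [Field k] {p : ℕ}
    [CharP k p] [AddCommGroup V] [Module k V] [FiniteDimensional k V] (hV : finrank k V ≤ p)
    {f : Module.End k V} (hf : IsIdempotentElem f) (htr : trace k V f = 0) : f = 0 ∨ f = 1 := by
  have hdvd : p ∣ finrank k (range f) := by
    rwa [hf.isProj_range.trace, CharP.cast_eq_zero_iff k p] at htr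
  have hle : finrank k (range f) ≤ p := (Submodule.finrank_le _).trans hV
  rcases hle.lt_or_eq with hlt | heq
  · left
    rw [← range_eq_bot, ← Submodule.finrank_eq_zero]
    exact Nat.eq_zero_of_dvd_of_lt hdvd hlt
  · right
    have htop : range f = ⊤ :=
      Submodule.eq_top_of_finrank_eq ((Submodule.finrank_le _).antisymm (heq ▸ hV))
    ext x
    exact hf.isProj_range.map_id x (htop ▸ Submodule.mem_top)

theorem um_two_dim_module_trivial_general (k : Type*) [Field k] [CharP k 2]
    (V : Type*) [AddCommGroup V] [Module k V] [FiniteDimensional k V]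
    (hdim : Module.finrank k V = 2)
    (A B C : Module.End k V)
    (hab : A*B + B*A = C) (hac : A*C + C*A = A) (hbc : B*C + C*B = B)
    (hc2 : C^2 = C) :
    A = 0 ∧ B = 0 ∧ C = 0 := by
  have hC : C = 0 ∨ C = 1 :=
    IsIdempotentElem.eq_zero_or_eq_one_of_trace_eq_zero hdim.le (by rwa [sq] at hc2)
      (hab ▸ trace_mul_add_mul_eq_zero A B)
  have hkill : ∀ X : Module.End k V, X * C + C * X = X → X = 0 := by
    rintro X hX
    rcases hC with rfl | rfl
    · simpa using hX.symm
    · simpa [CharTwo.add_self_eq_zero] using hX.symm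
  obtain rfl := hkill A hac
  obtain rfl := hkill B hbc
  exact ⟨rfl, rfl, by simpa using hab.symm⟩

/-- Every 2-dimensional module over u(m) (characteristic 2) is trivial:
a, b, c act by the zero endomorphism. -/
theorem um_two_dim_module_trivial (k : Type*) [Field k] [IsAlgClosed k] [CharP k 2]
    (V : Type*) [AddCommGroup V] [Module k V] [FiniteDimensional k V]
    (hdim : Module.finrank k V = 2)
    (A B C : Module.End k V)
    (hab : A*B + B*A = C) (hac : A*C + C*A = A) (hbc : B*C + C*B = B)
    (ha4 : A^4 = 0) (hb4 : B^4 = 0) (hc2 : C^2 = C) :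
    A = 0 ∧ B = 0 ∧ C = 0 :=
  um_two_dim_module_trivial_general k V hdim A B C hab hac hbc hc2
end

section
/- Let k be a field of characteristic 2. Define 3×3 matrices A, B, C over k by: A has entries A(2,1)=A(3,2)=1 and all others 0; B has entries B(1,2)=B(2,3)=1 and all others 0; C has entries C(1,1)=C(3,3)=1 and all others 0. Then A,B,C satisfy the relations AB+BA=C, AC+CA=A, BC+CB=B, A⁴=0, B⁴=0, C²=C, hence they define a 3-dimensional module V₁ over the algebra u(m). Moreover V₁ is a simple module. -/
set_option maxHeartbeats 1000000


/-- The 3×3 matrices A (subdiagonal ones), B (superdiagonal ones), C = diag(1,0,1)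
over a field of characteristic 2 satisfy the defining relations of u(m), hence give
a 3-dimensional u(m)-module V₁, and this module is simple. -/
theorem um_V1_module_and_simple (k : Type*) [Field k] [IsAlgClosed k] [CharP k 2] :
    let A : Matrix (Fin 3) (Fin 3) k := !![0,0,0; 1,0,0; 0,1,0]
    let B : Matrix (Fin 3) (Fin 3) k := !![0,1,0; 0,0,1; 0,0,0]
    let C : Matrix (Fin 3) (Fin 3) k := !![1,0,0; 0,0,0; 0,0,1]
    (A*B + B*A = C ∧ A*C + C*A = A ∧ B*C + C*B = B ∧
      A^4 = 0 ∧ B^4 = 0 ∧ C^2 = C) ∧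
    (∀ W : Submodule k (Fin 3 → k),
      (∀ v ∈ W, A.mulVec v ∈ W ∧ B.mulVec v ∈ W ∧ C.mulVec v ∈ W) →
        W = ⊥ ∨ W = ⊤) := by
  intro A B C
  have h2 : (1:k) + 1 = 0 := by
    have : (2:k) = 0 := CharP.cast_eq_zero k 2
    linear_combination this
  have hA2 : A * A = !![0,0,0; 0,0,0; 1,0,0] := by
    ext i j
    fin_cases i <;> fin_cases j <;>
      simp [A, Matrix.mul_apply, Fin.sum_univ_succ, Matrix.vecHead, Matrix.vecTail]
  have hB2 : B * B = !![0,0,1; 0,0,0; 0,0,0] := by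
    ext i j
    fin_cases i <;> fin_cases j <;>
      simp [B, Matrix.mul_apply, Fin.sum_univ_succ, Matrix.vecHead, Matrix.vecTail]
  constructor
  · refine ⟨?_, ?_, ?_, ?_, ?_, ?_⟩
    · ext i j
      fin_cases i <;> fin_cases j <;>
        simp [A, B, C, Matrix.mul_apply, Fin.sum_univ_succ, Matrix.vecHead, Matrix.vecTail, h2]
    · ext i j
      fin_cases i <;> fin_cases j <;>
        simp [A, B, C, Matrix.mul_apply, Fin.sum_univ_succ, Matrix.vecHead, Matrix.vecTail, h2]
    · ext i j
      fin_cases i <;> fin_cases j <;>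
        simp [A, B, C, Matrix.mul_apply, Fin.sum_univ_succ, Matrix.vecHead, Matrix.vecTail, h2]
    · have : A ^ 4 = (A * A) * (A * A) := by rw [show (4:ℕ) = 2+2 from rfl, pow_add, pow_two]
      rw [this, hA2]
      ext i j
      fin_cases i <;> fin_cases j <;>
        simp [Matrix.mul_apply, Fin.sum_univ_succ, Matrix.vecHead, Matrix.vecTail]
    · have : B ^ 4 = (B * B) * (B * B) := by rw [show (4:ℕ) = 2+2 from rfl, pow_add, pow_two]
      rw [this, hB2]
      ext i j
      fin_cases i <;> fin_cases j <;>
        simp [Matrix.mul_apply, Fin.sum_univ_succ, Matrix.vecHead, Matrix.vecTail]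
    · have : C ^ 2 = C * C := sq C
      rw [this]
      ext i j
      fin_cases i <;> fin_cases j <;>
        simp [C, Matrix.mul_apply, Fin.sum_univ_succ, Matrix.vecHead, Matrix.vecTail]
  · intro W hW
    rcases eq_or_ne W ⊥ with hb | hb
    · exact Or.inl hb
    right
    -- there is a nonzero vector in W
    obtain ⟨v, hvW, hv⟩ := Submodule.exists_mem_ne_zero_of_ne_bot hb
    have hAv : ∀ w ∈ W, A.mulVec w ∈ W := fun w hw => (hW w hw).1
    have hBv : ∀ w ∈ W, B.mulVec w ∈ W := fun w hw => (hW w hw).2.1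
    have hAmul : ∀ w : Fin 3 → k, A.mulVec w = ![0, w 0, w 1] := by
      intro w; funext i; fin_cases i <;>
        simp [A, Matrix.mulVec, dotProduct, Fin.sum_univ_succ]
    have hBmul : ∀ w : Fin 3 → k, B.mulVec w = ![w 1, w 2, 0] := by
      intro w; funext i; fin_cases i <;>
        simp [B, Matrix.mulVec, dotProduct, Fin.sum_univ_succ]
    -- key: e2 and e0 generate everything
    have he2top : (![0,0,1] : Fin 3 → k) ∈ W → W = ⊤ := by
      intro h2'
      have h1 : (![0,1,0] : Fin 3 → k) ∈ W := by
        have := hBv _ h2'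
        rwa [hBmul] at this
      have h0 : (![1,0,0] : Fin 3 → k) ∈ W := by
        have := hBv _ h1
        rwa [hBmul] at this
      rw [Submodule.eq_top_iff']
      intro x
      have hx : x = x 0 • (![1,0,0] : Fin 3 → k) + x 1 • ![0,1,0] + x 2 • ![0,0,1] := by
        funext i; fin_cases i <;> simp
      rw [hx]
      exact W.add_mem (W.add_mem (W.smul_mem _ h0) (W.smul_mem _ h1)) (W.smul_mem _ h2')
    have he0top : (![1,0,0] : Fin 3 → k) ∈ W → W = ⊤ := by
      intro h0
      apply he2top
      have h1 := hAv _ h0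
      rw [hAmul] at h1
      have h2' := hAv _ h1
      rw [hAmul] at h2'
      simpa using h2'
    -- case analysis on components of v
    by_cases hv0 : v 0 ≠ 0
    · -- A² v = (v 0) • e2
      have hA2 : A.mulVec (A.mulVec v) ∈ W := hAv _ (hAv _ hvW)
      rw [hAmul, hAmul] at hA2
      apply he2top
      have : (![0, 0, v 0] : Fin 3 → k) ∈ W := by simpa using hA2
      have := W.smul_mem (v 0)⁻¹ this
      convert this using 1
      funext i; fin_cases i <;> simp [inv_mul_cancel₀ hv0]
    by_cases hv2 : v 2 ≠ 0
    · have hB2 : B.mulVec (B.mulVec v) ∈ W := hBv _ (hBv _ hvW)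
      rw [hBmul, hBmul] at hB2
      apply he0top
      have : (![v 2, 0, 0] : Fin 3 → k) ∈ W := by simpa using hB2
      have := W.smul_mem (v 2)⁻¹ this
      convert this using 1
      funext i; fin_cases i <;> simp [inv_mul_cancel₀ hv2]
    · push_neg at hv0 hv2
      have hv1 : v 1 ≠ 0 := by
        intro h1
        apply hv
        funext i; fin_cases i <;> simp [hv0, h1, hv2]
      have hA1 : A.mulVec v ∈ W := hAv _ hvW
      rw [hAmul] at hA1
      apply he2top
      have : (![0, 0, v 1] : Fin 3 → k) ∈ W := by
        convert hA1 using 1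
        funext i; fin_cases i <;> simp [hv0]
      have := W.smul_mem (v 1)⁻¹ this
      convert this using 1
      funext i; fin_cases i <;> simp [inv_mul_cancel₀ hv1]
end

section
/- Let k be an algebraically closed field of characteristic 2 and U = u(m). Up to isomorphism, the only simple finite-dimensional U-modules are the trivial 1-dimensional module V₀ and the 3-dimensional module V₁ given by the matrices A,B,C above. -/
/-!
As `A` is nilpotent, some `v ≠ 0` has `A v = 0`. Then `C v` or, if `C v = 0`, `B v` is a
highest weight vector `w` (`A w = 0`, `C w = w`), unless `v` is killed by `A`, `B` and `C`; in
that case simplicity gives `V = k v` with the zero action. From a highest weight vector `v` the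
relations produce the string `v, B v, B² v`, on which `A` steps back down (this uses
`-1 = 1`) and `C` has eigenvalues `1, 0, 1`, while `B³ v` lies in the common kernel of `A`,
`B`, `C`. That kernel is a submodule missing `v`, so it is zero and `B³ v = 0`. Hence
`B² v, B v, v` span a nonzero submodule, i.e. `V`, and they are independent since `A` shifts
them down the string: this is `V₁`.
-/

open Module Submodule

section

variable {k V : Type*} [Field k] [AddCommGroup V] [Module k V]

lemma Module.End.exists_ne_zero_apply_eq_zero_of_pow_eq_zero [Nontrivial V]
    {T : Module.End k V} {n : ℕ} (h : T ^ n = 0) : ∃ v ≠ 0, T v = 0 := by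
  by_contra! hT
  have hinj : Function.Injective T :=
    (injective_iff_map_eq_zero T).2 fun v ↦ not_imp_not.1 (hT v)
  obtain ⟨v, hv⟩ := exists_ne (0 : V)
  exact hv (hinj.iterate n (by simp [← Module.End.coe_pow, h]))

lemma linearIndependent_of_apply_eq {T : Module.End k V} {x y z : V}
    (hx : T x = y) (hy : T y = z) (hz : T z = 0) (hz0 : z ≠ 0) :
    LinearIndependent k ![x, y, z] := by
  rw [Fintype.linearIndependent_iff]
  intro g hg
  simp only [Fin.sum_univ_three, Matrix.cons_val_zero, Matrix.cons_val_one,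
    Matrix.cons_val_two, Matrix.head_cons, Matrix.tail_cons] at hg
  have h0 : g 0 = 0 := by simpa [hx, hy, hz, hz0] using congrArg (fun w ↦ T (T w)) hg
  have h1 : g 1 = 0 := by simpa [hx, hy, hz, hz0, h0] using congrArg T hg
  have h2 : g 2 = 0 := by simpa [hz0, h0, h1] using hg
  intro i
  fin_cases i <;> assumption

lemma Module.Basis.equivFun_apply_eq_mulVec {ι : Type*} [Fintype ι] [DecidableEq ι]
    (b : Basis ι k V) {T : Module.End k V} {M : Matrix ι ι k}
    (hM : LinearMap.toMatrix b b T = M) (x : V) : b.equivFun (T x) = M.mulVec (b.equivFun x) := by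
  rw [← hM, Basis.equivFun_apply, Basis.equivFun_apply, LinearMap.toMatrix_mulVec_repr]

variable {A B C : Module.End k V}

lemma A_apply_B_apply (hab : A * B + B * A = C) (x : V) : A (B x) = C x - B (A x) :=
  eq_sub_of_add_eq (LinearMap.congr_fun hab x)

lemma C_apply_B_apply (hbc : B * C + C * B = B) (x : V) : C (B x) = B x - B (C x) :=
  eq_sub_of_add_eq' (LinearMap.congr_fun hbc x)

lemma exists_highest_weight_vector_or_apply_eq_zero (hab : A * B + B * A = C)
    (hac : A * C + C * A = A) (hbc : B * C + C * B = B) (hc2 : C ^ 2 = C)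
    {v : V} (hAv : A v = 0) :
    (∃ w ≠ 0, A w = 0 ∧ C w = w) ∨ (B v = 0 ∧ C v = 0) := by
  by_cases hCv : C v = 0
  · by_cases hBv : B v = 0
    · exact Or.inr ⟨hBv, hCv⟩
    · exact Or.inl ⟨B v, hBv, by simp [A_apply_B_apply hab, hAv, hCv],
        by simp [C_apply_B_apply hbc, hCv]⟩
  · refine Or.inl ⟨C v, hCv, ?_, by simpa [pow_two] using LinearMap.congr_fun hc2 v⟩
    simpa [hAv] using LinearMap.congr_fun hac v

lemma ker_inf_ker_inf_ker_eq_bot_or_eq_top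
    (hsimple : ∀ W : Submodule k V,
      (∀ v ∈ W, A v ∈ W ∧ B v ∈ W ∧ C v ∈ W) → W = ⊥ ∨ W = ⊤) :
    LinearMap.ker A ⊓ LinearMap.ker B ⊓ LinearMap.ker C = ⊥ ∨
      LinearMap.ker A ⊓ LinearMap.ker B ⊓ LinearMap.ker C = ⊤ :=
  hsimple _ fun v hv ↦ by simp_all

lemma span_eq_top_of_apply_mem_span
    (hsimple : ∀ W : Submodule k V,
      (∀ v ∈ W, A v ∈ W ∧ B v ∈ W ∧ C v ∈ W) → W = ⊥ ∨ W = ⊤)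
    {s : Set V} {x : V} (hx : x ∈ s) (hx0 : x ≠ 0)
    (hA : ∀ y ∈ s, A y ∈ span k s) (hB : ∀ y ∈ s, B y ∈ span k s)
    (hC : ∀ y ∈ s, C y ∈ span k s) : span k s = ⊤ := by
  have stable {T : Module.End k V} (hT : ∀ y ∈ s, T y ∈ span k s) {y : V}
      (hy : y ∈ span k s) : T y ∈ span k s :=
    (map_span_le T s _).2 hT (mem_map_of_mem hy)
  refine (hsimple _ fun y hy ↦ ⟨stable hA hy, stable hB hy, stable hC hy⟩).resolve_left ?_
  exact fun h ↦ hx0 <| (mem_bot k).1 (h ▸ subset_span hx)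

lemma finrank_eq_one_and_eq_zero
    (hsimple : ∀ W : Submodule k V,
      (∀ v ∈ W, A v ∈ W ∧ B v ∈ W ∧ C v ∈ W) → W = ⊥ ∨ W = ⊤)
    {v : V} (hv : v ≠ 0) (hAv : A v = 0) (hBv : B v = 0) (hCv : C v = 0) :
    finrank k V = 1 ∧ A = 0 ∧ B = 0 ∧ C = 0 := by
  have hspan : span k {v} = ⊤ :=
    span_eq_top_of_apply_mem_span hsimple rfl hv
      (by simp [hAv]) (by simp [hBv]) (by simp [hCv])
  have hker : LinearMap.ker A ⊓ LinearMap.ker B ⊓ LinearMap.ker C = ⊤ :=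
    (ker_inf_ker_inf_ker_eq_bot_or_eq_top hsimple).resolve_left fun h ↦
      hv <| (mem_bot k).1 (h ▸ ⟨⟨hAv, hBv⟩, hCv⟩)
  simp only [inf_eq_top_iff, LinearMap.ker_eq_top] at hker
  refine ⟨?_, hker.1.1, hker.1.2, hker.2⟩
  rw [← finrank_top, ← hspan, finrank_span_singleton hv]

lemma exists_basis_of_highest_weight_vector [CharP k 2] (hab : A * B + B * A = C)
    (hbc : B * C + C * B = B) (hb4 : B ^ 4 = 0)
    (hsimple : ∀ W : Submodule k V,
      (∀ v ∈ W, A v ∈ W ∧ B v ∈ W ∧ C v ∈ W) → W = ⊥ ∨ W = ⊤)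
    {v : V} (hv : v ≠ 0) (hAv : A v = 0) (hCv : C v = v) :
    ∃ b : Basis (Fin 3) k V, A (b 0) = b 1 ∧ A (b 1) = b 2 ∧ A (b 2) = 0 ∧
      B (b 0) = 0 ∧ B (b 1) = b 0 ∧ B (b 2) = b 1 ∧
      C (b 0) = b 0 ∧ C (b 1) = 0 ∧ C (b 2) = b 2 := by
  have hABv : A (B v) = v := by rw [A_apply_B_apply hab, hAv, map_zero, sub_zero, hCv]
  have hCBv : C (B v) = 0 := by rw [C_apply_B_apply hbc, hCv, sub_self]
  have hAB2v : A (B (B v)) = B v := by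
    rw [A_apply_B_apply hab, hCBv, hABv, zero_sub, neg_eq_iff_add_eq_zero, ← two_smul k,
      CharTwo.two_eq_zero, zero_smul]
  have hCB2v : C (B (B v)) = B (B v) := by rw [C_apply_B_apply hbc, hCBv, map_zero, sub_zero]
  have hB3v : B (B (B v)) = 0 := by
    have hA3 : A (B (B (B v))) = 0 := by rw [A_apply_B_apply hab, hCB2v, hAB2v, sub_self]
    have hB3 : B (B (B (B v))) = 0 := by simpa [pow_succ] using LinearMap.congr_fun hb4 v
    have hC3 : C (B (B (B v))) = 0 := by rw [C_apply_B_apply hbc, hCB2v, sub_self]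
    rcases ker_inf_ker_inf_ker_eq_bot_or_eq_top hsimple with h | h
    · have hmem : B (B (B v)) ∈ LinearMap.ker A ⊓ LinearMap.ker B ⊓ LinearMap.ker C := by
        simp [hA3, hB3, hC3]
      simpa [h] using hmem
    · have hmem : v ∈ LinearMap.ker A ⊓ LinearMap.ker B ⊓ LinearMap.ker C := by simp [h]
      simp [hCv, hv] at hmem
  have hspan : span k (Set.range ![B (B v), B v, v]) = ⊤ := by
    refine span_eq_top_of_apply_mem_span hsimple ⟨2, rfl⟩ hv ?_ ?_ ?_ <;>
      simp [hABv, hAB2v, hAv, hCBv, hCB2v, hCv, hB3v, mem_span_of_mem]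
  refine ⟨Basis.mk (linearIndependent_of_apply_eq hAB2v hABv hAv hv) hspan.ge, ?_⟩
  simp [hABv, hAB2v, hAv, hCBv, hCB2v, hCv, hB3v]

lemma exists_equiv_of_highest_weight_vector [CharP k 2] (hab : A * B + B * A = C)
    (hbc : B * C + C * B = B) (hb4 : B ^ 4 = 0)
    (hsimple : ∀ W : Submodule k V,
      (∀ v ∈ W, A v ∈ W ∧ B v ∈ W ∧ C v ∈ W) → W = ⊥ ∨ W = ⊤)
    {v : V} (hv : v ≠ 0) (hAv : A v = 0) (hCv : C v = v) :
    ∃ e : V ≃ₗ[k] (Fin 3 → k),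
      (∀ x, e (A x) = (!![0,0,0; 1,0,0; 0,1,0] : Matrix (Fin 3) (Fin 3) k).mulVec (e x)) ∧
      (∀ x, e (B x) = (!![0,1,0; 0,0,1; 0,0,0] : Matrix (Fin 3) (Fin 3) k).mulVec (e x)) ∧
      (∀ x, e (C x) = (!![1,0,0; 0,0,0; 0,0,1] : Matrix (Fin 3) (Fin 3) k).mulVec (e x)) := by
  obtain ⟨b, hA0, hA1, hA2, hB0, hB1, hB2, hC0, hC1, hC2⟩ :=
    exists_basis_of_highest_weight_vector hab hbc hb4 hsimple hv hAv hCv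
  refine ⟨b.equivFun, b.equivFun_apply_eq_mulVec ?_, b.equivFun_apply_eq_mulVec ?_,
    b.equivFun_apply_eq_mulVec ?_⟩ <;>
  · ext i j
    fin_cases i <;> fin_cases j <;>
      simp [LinearMap.toMatrix_apply, hA0, hA1, hA2, hB0, hB1, hB2, hC0, hC1, hC2]

end

theorem um_simple_modules_classification_general
    (k : Type*) [Field k] [CharP k 2]
    (V : Type*) [AddCommGroup V] [Module k V] [Nontrivial V]
    (A B C : Module.End k V)
    (hab : A*B + B*A = C) (hac : A*C + C*A = A) (hbc : B*C + C*B = B)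
    (ha4 : A^4 = 0) (hb4 : B^4 = 0) (hc2 : C^2 = C)
    (hsimple : ∀ W : Submodule k V,
      (∀ v ∈ W, A v ∈ W ∧ B v ∈ W ∧ C v ∈ W) → W = ⊥ ∨ W = ⊤) :
    (Module.finrank k V = 1 ∧ A = 0 ∧ B = 0 ∧ C = 0) ∨
    (∃ e : V ≃ₗ[k] (Fin 3 → k),
      (∀ v, e (A v) = (!![0,0,0; 1,0,0; 0,1,0] : Matrix (Fin 3) (Fin 3) k).mulVec (e v)) ∧
      (∀ v, e (B v) = (!![0,1,0; 0,0,1; 0,0,0] : Matrix (Fin 3) (Fin 3) k).mulVec (e v)) ∧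
      (∀ v, e (C v) = (!![1,0,0; 0,0,0; 0,0,1] : Matrix (Fin 3) (Fin 3) k).mulVec (e v))) := by
  obtain ⟨v, hv, hAv⟩ := Module.End.exists_ne_zero_apply_eq_zero_of_pow_eq_zero ha4
  rcases exists_highest_weight_vector_or_apply_eq_zero hab hac hbc hc2 hAv with
    ⟨w, hw, hAw, hCw⟩ | ⟨hBv, hCv⟩
  · exact Or.inr (exists_equiv_of_highest_weight_vector hab hbc hb4 hsimple hw hAw hCw)
  · exact Or.inl (finrank_eq_one_and_eq_zero hsimple hv hAv hBv hCv)

/-- Over an algebraically closed field of characteristic 2, the only simple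
finite-dimensional u(m)-modules are the trivial 1-dimensional module V₀ and the
3-dimensional module V₁ given by the matrices A, B, C. -/
theorem um_simple_modules_classification
    (k : Type*) [Field k] [IsAlgClosed k] [CharP k 2]
    (V : Type*) [AddCommGroup V] [Module k V] [FiniteDimensional k V] [Nontrivial V]
    (A B C : Module.End k V)
    (hab : A*B + B*A = C) (hac : A*C + C*A = A) (hbc : B*C + C*B = B)
    (ha4 : A^4 = 0) (hb4 : B^4 = 0) (hc2 : C^2 = C)
    (hsimple : ∀ W : Submodule k V,
      (∀ v ∈ W, A v ∈ W ∧ B v ∈ W ∧ C v ∈ W) → W = ⊥ ∨ W = ⊤) :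
    (Module.finrank k V = 1 ∧ A = 0 ∧ B = 0 ∧ C = 0) ∨
    (∃ e : V ≃ₗ[k] (Fin 3 → k),
      (∀ v, e (A v) = (!![0,0,0; 1,0,0; 0,1,0] : Matrix (Fin 3) (Fin 3) k).mulVec (e v)) ∧
      (∀ v, e (B v) = (!![0,1,0; 0,0,1; 0,0,0] : Matrix (Fin 3) (Fin 3) k).mulVec (e v)) ∧
      (∀ v, e (C v) = (!![1,0,0; 0,0,0; 0,0,1] : Matrix (Fin 3) (Fin 3) k).mulVec (e v))) :=
  um_simple_modules_classification_general k V A B C hab hac hbc ha4 hb4 hc2 hsimple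
end

section
/- Let k have characteristic 2 and let B(V) be the algebra generated by x₁, x₂ with relations x₁²=0, x₂⁴=0, x₂²x₁ = x₁x₂² + x₁x₂x₁, x₁x₂x₁x₂ = x₂x₁x₂x₁. Setting x₂₁ = x₁x₂ + x₂x₁, the element x₂₁ satisfies x₂₁x₁ = x₁x₂₁ and x₂₁² = 0 in B(V). -/
/-- In the restricted Jordan plane B(V) in characteristic 2 (generated by x₁, x₂
with x₁²=0, x₂⁴=0, x₂²x₁ = x₁x₂² + x₁x₂x₁, x₁x₂x₁x₂ = x₂x₁x₂x₁), the element
x₂₁ = x₁x₂ + x₂x₁ commutes with x₁ and squares to zero. -/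
theorem restricted_jordan_x21 (k : Type*) [Field k] [CharP k 2]
    (BV : Type*) [Ring BV] [Algebra k BV] (x1 x2 : BV)
    (h1 : x1^2 = 0) (h2 : x2^4 = 0)
    (h3 : x2^2*x1 = x1*x2^2 + x1*x2*x1)
    (h4 : x1*x2*x1*x2 = x2*x1*x2*x1) :
    (x1*x2 + x2*x1)*x1 = x1*(x1*x2 + x2*x1) ∧ (x1*x2 + x2*x1)^2 = 0 := by
  have two : (2 : BV) = 0 := by
    have hk : (2 : k) = 0 := by exact_mod_cast CharP.cast_eq_zero k 2
    calc (2 : BV) = algebraMap k BV 2 := (map_ofNat _ 2).symm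
      _ = 0 := by rw [hk, map_zero]
  have dbl : ∀ a : BV, a + a = 0 := fun a => by rw [← two_mul, two, zero_mul]
  have hx : x1 * x1 = 0 := by rw [← pow_two]; exact h1
  have hx' : ∀ y : BV, x1 * (x1 * y) = 0 := fun y => by
    rw [← mul_assoc, hx, zero_mul]
  have h3' : x2 * (x2 * x1) = x1 * (x2 * x2) + x1 * (x2 * x1) := by
    have := h3
    rw [pow_two] at this
    calc x2 * (x2 * x1) = x2 * x2 * x1 := by rw [mul_assoc]
      _ = x1 * (x2 * x2) + x1 * x2 * x1 := this
      _ = x1 * (x2 * x2) + x1 * (x2 * x1) := by rw [mul_assoc]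
  have h4' : x1 * (x2 * (x1 * x2)) = x2 * (x1 * (x2 * x1)) := by
    calc x1 * (x2 * (x1 * x2)) = x1 * x2 * x1 * x2 := by rw [mul_assoc, mul_assoc]
      _ = x2 * x1 * x2 * x1 := h4
      _ = x2 * (x1 * (x2 * x1)) := by rw [mul_assoc, mul_assoc]
  constructor
  · simp [add_mul, mul_add, mul_assoc, hx, hx']
  · rw [pow_two, add_mul, mul_add, mul_add]
    rw [mul_assoc x1 x2, mul_assoc x1 x2, mul_assoc x2 x1, mul_assoc x2 x1]
    rw [h4', h3', mul_add, hx', hx', hx', mul_zero]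
    simp only [add_zero, zero_add]
    exact dbl _
end

section
/- In the algebra Ĥ over a field k of characteristic 2 generated by x₁, x₂, g^{±1} with relations x₁²=0, x₂²x₁ = x₁x₂² + x₁x₂x₁, gx₁ = x₁g, gx₂ = x₂g + x₁g, g g^{-1} = g^{-1} g = 1, the following hold for all n ≥ 0 (with x₂₁ := x₂x₁ + x₁x₂): (x₁+x₂)^{2n} = x₂^{2n} + n·x₂₁x₂^{2n−2} and x₂^{2n}x₁ = x₁x₂^{2n} + n·x₁x₂₁x₂^{2n−2}. -/
/-- In the algebra Ĥ (characteristic 2, generators x₁, x₂, g^{±1} with x₁²=0,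
x₂²x₁ = x₁x₂² + x₁x₂x₁, gx₁ = x₁g, gx₂ = x₂g + x₁g), for all n ≥ 0, with
x₂₁ = x₂x₁ + x₁x₂ one has (x₁+x₂)^{2n} = x₂^{2n} + n·x₂₁x₂^{2n-2} and
x₂^{2n}x₁ = x₁x₂^{2n} + n·x₁x₂₁x₂^{2n-2} (coefficients mod 2). -/
theorem Htilde_commutation (k : Type*) [Field k] [CharP k 2]
    (Hh : Type*) [Ring Hh] [Algebra k Hh] (x1 x2 g gi : Hh)
    (h1 : x1^2 = 0) (h2 : x2^2*x1 = x1*x2^2 + x1*x2*x1)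
    (h3 : g*x1 = x1*g) (h4 : g*x2 = x2*g + x1*g)
    (h5 : g*gi = 1) (h6 : gi*g = 1) :
    ∀ n : ℕ,
      (x1 + x2)^(2*n) = x2^(2*n) + n • ((x2*x1 + x1*x2) * x2^(2*n-2)) ∧
      x2^(2*n)*x1 = x1*x2^(2*n) + n • (x1*(x2*x1 + x1*x2) * x2^(2*n-2)) := by
  -- characteristic two facts in Hh
  have h2k : (2:k) = 0 := by
    have := CharP.cast_eq_zero k 2
    exact_mod_cast this
  have h2H : (2:Hh) = 0 := by
    have : (2:Hh) = algebraMap k Hh (2:k) := (map_ofNat (algebraMap k Hh) 2).symm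
    rw [this, h2k, map_zero]
  have hadd : ∀ a : Hh, a + a = 0 := fun a => by
    rw [← two_mul, h2H, zero_mul]
  have cancel : ∀ (j:ℕ) (X : Hh), j • X + j • X = 0 := fun j X => by
    rw [← smul_add, hadd, smul_zero]
  set c := x2*x1 + x1*x2 with hc
  have a1 : x1*x1 = 0 := by rw [← pow_two, h1]
  have hx1c : x1 * c = x1*x2*x1 := by
    rw [hc, mul_add, ← mul_assoc x1 x1 x2, a1, zero_mul, add_zero, ← mul_assoc]
  have h2' : x2^2*x1 = x1*x2^2 + x1*c := by rw [h2, ← hx1c]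
  have b1 : x2^2*(x2*x1) = x2*x1*x2^2 + x2*x1*(x2*x1) := by
    calc x2^2*(x2*x1) = x2*(x2^2*x1) := by noncomm_ring
    _ = x2*(x1*x2^2 + x1*x2*x1) := by rw [h2]
    _ = x2*x1*x2^2 + x2*x1*(x2*x1) := by noncomm_ring
  have b2 : x2^2*(x1*x2) = x1*x2*x2^2 + x1*x2*(x1*x2) := by
    calc x2^2*(x1*x2) = (x2^2*x1)*x2 := by noncomm_ring
    _ = (x1*x2^2 + x1*x2*x1)*x2 := by rw [h2]
    _ = x1*x2*x2^2 + x1*x2*(x1*x2) := by noncomm_ring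
  have e1 : x1*(x2^2*x1) = 0 := by
    rw [h2]
    have : x1*(x1*x2^2 + x1*x2*x1) = (x1*x1)*x2^2 + (x1*x1)*(x2*x1) := by noncomm_ring
    rw [this, a1, zero_mul, zero_mul, add_zero]
  have ccalc : c*c = x2*x1*(x2*x1) + x1*x2*(x1*x2) := by
    have expand : c*c = x2*x1*(x2*x1) + x2*(x1*x1)*x2 + x1*(x2^2*x1) + x1*x2*(x1*x2) := by
      rw [hc]; noncomm_ring
    rw [expand, a1, e1, mul_zero, zero_mul, add_zero, add_zero]
  have L1 : x2^2 * c = c * x2^2 + c * c := by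
    calc x2^2*c = x2^2*(x2*x1) + x2^2*(x1*x2) := by rw [hc, mul_add]
    _ = (x2*x1*x2^2 + x2*x1*(x2*x1)) + (x1*x2*x2^2 + x1*x2*(x1*x2)) := by rw [b1, b2]
    _ = c*x2^2 + (x2*x1*(x2*x1) + x1*x2*(x1*x2)) := by rw [hc]; noncomm_ring
    _ = c*x2^2 + c*c := by rw [ccalc]
  have hp : ∀ m:ℕ, x2^(m+2) = x2^2 * x2^m := fun m => by
    rw [pow_add, pow_mul_comm]
  -- key fact: x1*c commutes with x2^2
  have t3 : x2^2*(x1*c) = x1*c*x2^2 := by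
    calc x2^2*(x1*c) = (x2^2*x1)*c := by rw [mul_assoc]
    _ = x1*(x2^2*c) + x1*(c*c) := by rw [h2']; noncomm_ring
    _ = x1*(c*x2^2 + c*c) + x1*(c*c) := by rw [L1]
    _ = x1*c*x2^2 + (x1*(c*c) + x1*(c*c)) := by noncomm_ring
    _ = x1*c*x2^2 := by rw [hadd, add_zero]
  have Q : ∀ n:ℕ, x2^(2*n+2)*x1 = x1*x2^(2*n+2) + (n+1) • (x1*c*x2^(2*n)) := by
    intro n; induction n with
    | zero => simpa using h2'
    | succ m ih =>
      have e0 : 2*(m+1)+2 = (2*m+2)+2 := by ring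
      have e2 : 2*(m+1) = 2*m+2 := by ring
      have r1 : ∀ A B K : Hh, A + B + K = A + (K + B) := fun A B K => by abel
      rw [e0, e2, hp (2*m+2), mul_assoc, ih, mul_add, mul_smul_comm]
      have t1 : x2^2*(x1*x2^(2*m+2)) = x1*(x2^2*x2^(2*m+2)) + x1*c*x2^(2*m+2) := by
        rw [← mul_assoc, h2']; noncomm_ring
      have t2 : x2^2*(x1*c*x2^(2*m)) = x1*c*x2^(2*m+2) := by
        calc x2^2*(x1*c*x2^(2*m)) = (x2^2*(x1*c))*x2^(2*m) :=
              (mul_assoc (x2^2) (x1*c) (x2^(2*m))).symm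
        _ = x1*c*(x2^2*x2^(2*m)) := by rw [t3, mul_assoc]
        _ = x1*c*x2^(2*m+2) := by rw [← hp]
      rw [t1, t2, succ_nsmul (x1*c*x2^(2*m+2)) (m+1)]
      exact r1 _ _ _
  have P : ∀ n:ℕ, (x2^2 + c)^(n+1) = x2^(2*n+2) + (n+1) • (c*x2^(2*n)) := by
    intro n; induction n with
    | zero => simp
    | succ m ih =>
      have r2 : ∀ A B C D : Hh, A + (B + D) + (C + D) = A + (B + C) + (D + D) :=
        fun A B C D => by abel
      have e0 : 2*(m+1)+2 = (2*m+2)+2 := by ring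
      have e2 : 2*(m+1) = 2*m+2 := by ring
      have s1 : x2^2*(c*x2^(2*m)) = c*x2^(2*m+2) + c*c*x2^(2*m) := by
        rw [← mul_assoc, L1, add_mul, mul_assoc c (x2^2), ← hp]
      rw [e0, e2, pow_succ' (x2^2+c) (m+1), ih, hp (2*m+2)]
      calc (x2^2+c)*(x2^(2*m+2) + (m+1) • (c*x2^(2*m)))
          = x2^2*x2^(2*m+2) + (m+1) • (x2^2*(c*x2^(2*m)))
            + (c*x2^(2*m+2) + (m+1) • (c*c*x2^(2*m))) := by
            rw [add_mul, mul_add, mul_add, mul_smul_comm, mul_smul_comm, ← mul_assoc c c]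
      _ = x2^2*x2^(2*m+2) + ((m+1) • (c*x2^(2*m+2)) + (m+1) • (c*c*x2^(2*m)))
            + (c*x2^(2*m+2) + (m+1) • (c*c*x2^(2*m))) := by rw [s1, smul_add]
      _ = x2^2*x2^(2*m+2) + ((m+1) • (c*x2^(2*m+2)) + c*x2^(2*m+2))
            + ((m+1) • (c*c*x2^(2*m)) + (m+1) • (c*c*x2^(2*m))) := r2 _ _ _ _
      _ = x2^2*x2^(2*m+2) + ((m+1) • (c*x2^(2*m+2)) + c*x2^(2*m+2)) := by
            rw [cancel, add_zero]
      _ = x2^2*x2^(2*m+2) + (m+1+1) • (c*x2^(2*m+2)) := by rw [← succ_nsmul]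
  intro n
  rcases n with _ | m
  · constructor <;> simp
  · have sq1 : (x1+x2)^2 = x2^2 + c := by
      have expand : (x1+x2)^2 = x1*x1 + (x2^2 + (x2*x1 + x1*x2)) := by noncomm_ring
      rw [expand, a1, zero_add, hc]
    have em : 2*(m+1) = 2*m+2 := by ring
    have em2 : 2*(m+1)-2 = 2*m := by omega
    constructor
    · rw [em2, pow_mul, sq1, P m, em]
    · rw [em2, em, Q m]
end

section
/- Let k have characteristic 2 and U = u(m). Then dim Ext¹_U(V₀, V₀) = 0, where V₀ is the trivial 1-dimensional module; equivalently, every self-extension of the trivial module splits. -/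
/-- Ext¹ of the trivial u(m)-module by itself vanishes: every self-extension of
the trivial 1-dimensional module splits. Here E is a 2-dimensional u(m)-module
with a 1-dimensional submodule W such that both W and E/W carry the trivial
action; the conclusion is an invariant complement to W. -/
theorem um_ext_V0_V0_zero (k : Type*) [Field k] [IsAlgClosed k] [CharP k 2]
    (E : Type*) [AddCommGroup E] [Module k E] [FiniteDimensional k E]
    (hdim : Module.finrank k E = 2)
    (A B C : Module.End k E)
    (hab : A*B + B*A = C) (hac : A*C + C*A = A) (hbc : B*C + C*B = B)
    (ha4 : A^4 = 0) (hb4 : B^4 = 0) (hc2 : C^2 = C)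
    (W : Submodule k E) (hW : Module.finrank k W = 1)
    (hrA : LinearMap.range A ≤ W) (hrB : LinearMap.range B ≤ W)
    (hrC : LinearMap.range C ≤ W)
    (hkA : W ≤ LinearMap.ker A) (hkB : W ≤ LinearMap.ker B)
    (hkC : W ≤ LinearMap.ker C) :
    ∃ W' : Submodule k E, IsCompl W W' ∧
      ∀ v ∈ W', A v ∈ W' ∧ B v ∈ W' ∧ C v ∈ W' := by
  have hC2 : C^2 = 0 := by
    ext v
    have : C v ∈ W := hrC ⟨v, rfl⟩
    have := hkC this
    simpa [pow_two, Module.End.mul_apply] using this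
  have hC : C = 0 := by rw [← hc2, hC2]
  have hA : A = 0 := by rw [← hac, hC]; simp
  have hB : B = 0 := by rw [← hbc, hC]; simp
  obtain ⟨W', hW'⟩ := Submodule.exists_isCompl W
  exact ⟨W', hW', fun v hv => by simp [hA, hB, hC, Submodule.zero_mem]⟩
end

section
/- Let k have characteristic 2 and U = u(m). Then Ext¹_U(V₁, V₁) = 0: every short exact sequence 0 → V₁ → E → V₁ → 0 of U-modules splits, where V₁ is the 3-dimensional simple module. -/
/-!
Start from `C w` for any lift `w` of `e₀`: it is fixed by `C` and still lifts `e₀`. Then `B (C w)`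
lies in `f V₁` and is killed by `C`, so it equals `B₁ t` for a `C₁`-fixed `t`, and
`v = C w - f t` is a highest weight vector: `g v = e₀`, `C v = v`, `B v = 0`. In characteristic 2
the relations then give `B (A v) = v`, `B (A² v) = A v`, `C (A v) = 0`, `C (A² v) = A² v`, and
`A³ v` lies in `f V₁` and is killed by `B` and `C`; since no nonzero vector of `V₁` is,
`A³ v = 0`. Hence `x ↦ x₀ v + x₁ A v + x₂ A² v` is a module map splitting `g`.
-/

open Module

namespace V₁

variable (k : Type*) [CommRing k]

def A : End k (Fin 3 → k) := Matrix.mulVecLin !![0,0,0; 1,0,0; 0,1,0]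

def B : End k (Fin 3 → k) := Matrix.mulVecLin !![0,1,0; 0,0,1; 0,0,0]

def C : End k (Fin 3 → k) := Matrix.mulVecLin !![1,0,0; 0,0,0; 0,0,1]

variable {k}

@[simp]
theorem A_apply (x : Fin 3 → k) : A k x = ![0, x 0, x 1] := by
  ext i; fin_cases i <;> simp [A, Matrix.mulVec, dotProduct, Fin.sum_univ_three]

@[simp]
theorem B_apply (x : Fin 3 → k) : B k x = ![x 1, x 2, 0] := by
  ext i; fin_cases i <;> simp [B, Matrix.mulVec, dotProduct, Fin.sum_univ_three]

@[simp]
theorem C_apply (x : Fin 3 → k) : C k x = ![x 0, 0, x 2] := by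
  ext i; fin_cases i <;> simp [C, Matrix.mulVec, dotProduct, Fin.sum_univ_three]

theorem A_A_A_eq_zero (x : Fin 3 → k) : A k (A k (A k x)) = 0 := by
  ext i; fin_cases i <;> simp

theorem eq_zero_of_B_eq_zero_of_C_eq_zero {x : Fin 3 → k} (hB : B k x = 0) (hC : C k x = 0) :
    x = 0 := by
  have h₀ : x 0 = 0 := by simpa using congrFun hC 0
  have h₁ : x 1 = 0 := by simpa using congrFun hB 0
  have h₂ : x 2 = 0 := by simpa using congrFun hB 1
  ext i; fin_cases i <;> assumption

theorem exists_C_eq_self_B_eq_of_C_eq_zero {u : Fin 3 → k} (hu : C k u = 0) :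
    ∃ t, C k t = t ∧ B k t = u := by
  have h₀ : u 0 = 0 := by simpa using congrFun hu 0
  have h₂ : u 2 = 0 := by simpa using congrFun hu 2
  refine ⟨![0, 0, u 1], ?_, ?_⟩ <;> ext i <;> fin_cases i <;> simp [h₀, h₂]

end V₁

section Orbit

variable {R M N : Type*} [CommRing R] [AddCommGroup M] [Module R M] [AddCommGroup N] [Module R N]

def orbitMap (A : End R M) (v : M) : (Fin 3 → R) →ₗ[R] M :=
  Fintype.linearCombination R ![v, A v, A (A v)]

theorem orbitMap_apply (A : End R M) (v : M) (x : Fin 3 → R) :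
    orbitMap A v x = x 0 • v + x 1 • A v + x 2 • A (A v) := by
  simp [orbitMap, Fintype.linearCombination_apply, Fin.sum_univ_three]

theorem comp_orbitMap {A : End R M} {A' : End R N} {g : M →ₗ[R] N} (hg : g ∘ₗ A = A' ∘ₗ g)
    (v : M) : g ∘ₗ orbitMap A v = orbitMap A' (g v) := by
  have hg' : ∀ x, g (A x) = A' (g x) := LinearMap.congr_fun hg
  refine LinearMap.ext fun x => ?_
  simp [orbitMap_apply, hg']

theorem V₁.orbitMap_A_eq_id : orbitMap (V₁.A R) ![1, 0, 0] = LinearMap.id := by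
  refine LinearMap.ext fun x => funext fun i => ?_
  fin_cases i <;> simp [orbitMap_apply]

theorem orbitMap_comp_A {A : End R M} {v : M} (hA : A (A (A v)) = 0) :
    A ∘ₗ orbitMap A v = orbitMap A v ∘ₗ V₁.A R := by
  refine LinearMap.ext fun x => ?_
  simp [orbitMap_apply, hA]

end Orbit

structure AnticommRelations {R M : Type*} [CommRing R] [AddCommGroup M] [Module R M]
    (A B C : End R M) : Prop where
  ab : A * B + B * A = C
  ac : A * C + C * A = A
  bc : B * C + C * B = B

theorem CharTwo.neg_eq_of_module (R : Type*) {M : Type*} [Ring R] [CharP R 2] [AddCommGroup M]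
    [Module R M] (x : M) : -x = x := by
  rw [← neg_one_smul R x, CharTwo.neg_eq, one_smul]

section Relations

variable {R M : Type*} [CommRing R] [AddCommGroup M] [Module R M]

theorem Module.End.apply_apply_eq_one_sub_smul {X Y : End R M} (h : X * Y + Y * X = X) {v : M}
    {μ : R} (hv : Y v = μ • v) : Y (X v) = (1 - μ) • X v := by
  have := LinearMap.congr_fun h v
  simp only [LinearMap.add_apply, Module.End.mul_apply, hv, map_smul] at this
  rw [sub_smul, one_smul, eq_sub_iff_add_eq, add_comm, this]

namespace AnticommRelations

variable {A B C : End R M} {v : M}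

theorem C_A_eq_zero (h : AnticommRelations A B C) (hC : C v = v) : C (A v) = 0 := by
  simpa using End.apply_apply_eq_one_sub_smul h.ac (μ := 1) (by simpa using hC)

theorem C_A_eq_self (h : AnticommRelations A B C) (hC : C v = 0) : C (A v) = A v := by
  simpa using End.apply_apply_eq_one_sub_smul h.ac (μ := 0) (by simpa using hC)

theorem C_B_eq_zero (h : AnticommRelations A B C) (hC : C v = v) : C (B v) = 0 := by
  simpa using End.apply_apply_eq_one_sub_smul h.bc (μ := 1) (by simpa using hC)

theorem B_A_eq (h : AnticommRelations A B C) : B (A v) = C v - A (B v) := by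
  rw [← LinearMap.congr_fun h.ab v]
  simp

theorem C_A_A_A_eq_zero (h : AnticommRelations A B C) (hC : C v = v) : C (A (A (A v))) = 0 :=
  h.C_A_eq_zero (h.C_A_eq_self (h.C_A_eq_zero hC))

theorem C_comp_orbitMap (h : AnticommRelations A B C) (hC : C v = v) :
    C ∘ₗ orbitMap A v = orbitMap A v ∘ₗ V₁.C R := by
  refine LinearMap.ext fun x => ?_
  simp [orbitMap_apply, hC, h.C_A_eq_zero hC, h.C_A_eq_self (h.C_A_eq_zero hC)]

variable [CharP R 2]

theorem B_A_A_eq (h : AnticommRelations A B C) (hC : C v = v) (hB : B v = 0) :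
    B (A (A v)) = A v := by
  rw [h.B_A_eq, h.B_A_eq, h.C_A_eq_zero hC, hB, hC, map_zero, sub_zero, zero_sub,
    CharTwo.neg_eq_of_module R]

theorem B_A_A_A_eq_zero (h : AnticommRelations A B C) (hC : C v = v) (hB : B v = 0) :
    B (A (A (A v))) = 0 := by
  rw [h.B_A_eq, h.B_A_A_eq hC hB, h.C_A_eq_self (h.C_A_eq_zero hC), sub_self]

theorem B_comp_orbitMap (h : AnticommRelations A B C) (hC : C v = v) (hB : B v = 0) :
    B ∘ₗ orbitMap A v = orbitMap A v ∘ₗ V₁.B R := by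
  refine LinearMap.ext fun x => ?_
  simp [orbitMap_apply, hB, hC, h.B_A_eq (v := v), h.B_A_A_eq hC hB]

end AnticommRelations

end Relations

section Extension

variable {k E : Type*} [CommRing k] [AddCommGroup E] [Module k E] {B C : End k E}
  {f : (Fin 3 → k) →ₗ[k] E} {g : E →ₗ[k] (Fin 3 → k)}

theorem eq_zero_of_apply_eq_zero_of_B_eq_zero_of_C_eq_zero (hf : Function.Injective f)
    (hfg : Function.Exact f g) (hBf : B ∘ₗ f = f ∘ₗ V₁.B k) (hCf : C ∘ₗ f = f ∘ₗ V₁.C k) {w : E}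
    (hgw : g w = 0) (hB : B w = 0) (hC : C w = 0) : w = 0 := by
  obtain ⟨t, rfl⟩ := (hfg w).mp hgw
  have hBt : V₁.B k t = 0 := hf <| by rw [map_zero, ← hB]; exact (LinearMap.congr_fun hBf t).symm
  have hCt : V₁.C k t = 0 := hf <| by rw [map_zero, ← hC]; exact (LinearMap.congr_fun hCf t).symm
  rw [V₁.eq_zero_of_B_eq_zero_of_C_eq_zero hBt hCt, map_zero]

theorem AnticommRelations.exists_lift_highestWeight {A : End k E} (h : AnticommRelations A B C)
    (hC : C ^ 2 = C) (hf : Function.Injective f) (hg : Function.Surjective g)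
    (hfg : Function.Exact f g) (hBf : B ∘ₗ f = f ∘ₗ V₁.B k) (hCf : C ∘ₗ f = f ∘ₗ V₁.C k)
    (hgB : g ∘ₗ B = V₁.B k ∘ₗ g) (hgC : g ∘ₗ C = V₁.C k ∘ₗ g) :
    ∃ v, g v = ![1, 0, 0] ∧ C v = v ∧ B v = 0 := by
  obtain ⟨w, hw⟩ := hg ![1, 0, 0]
  have hgCw : g (C w) = ![1, 0, 0] := by
    rw [← LinearMap.comp_apply, hgC, LinearMap.comp_apply, hw]; ext i; fin_cases i <;> simp
  have hCCw : C (C w) = C w := by rw [← Module.End.mul_apply, ← sq, hC]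
  obtain ⟨u, hu⟩ : ∃ u, f u = B (C w) := (hfg _).mp <| by
    rw [← LinearMap.comp_apply, hgB, LinearMap.comp_apply, hgCw]; ext i; fin_cases i <;> simp
  have hCu : V₁.C k u = 0 := hf <| by
    rw [map_zero, ← h.C_B_eq_zero hCCw, ← hu]; exact (LinearMap.congr_fun hCf u).symm
  obtain ⟨t, hCt, hBt⟩ := V₁.exists_C_eq_self_B_eq_of_C_eq_zero hCu
  refine ⟨C w - f t, ?_, ?_, ?_⟩
  · rw [map_sub, hgCw, hfg.apply_apply_eq_zero, sub_zero]
  · rw [map_sub, hCCw, ← LinearMap.comp_apply, hCf, LinearMap.comp_apply, hCt]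
  · rw [map_sub, ← hu, ← LinearMap.comp_apply, hBf, LinearMap.comp_apply, hBt, sub_self]

end Extension

theorem um_ext_V1_V1_zero_general (k : Type*) [Field k] [CharP k 2]
    (E : Type*) [AddCommGroup E] [Module k E]
    (A B C : Module.End k E)
    (hab : A*B + B*A = C) (hac : A*C + C*A = A) (hbc : B*C + C*B = B)
    (hc2 : C^2 = C) :
    let A₁ := Matrix.mulVecLin (!![0,0,0; 1,0,0; 0,1,0] : Matrix (Fin 3) (Fin 3) k)
    let B₁ := Matrix.mulVecLin (!![0,1,0; 0,0,1; 0,0,0] : Matrix (Fin 3) (Fin 3) k)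
    let C₁ := Matrix.mulVecLin (!![1,0,0; 0,0,0; 0,0,1] : Matrix (Fin 3) (Fin 3) k)
    ∀ (f : (Fin 3 → k) →ₗ[k] E) (g : E →ₗ[k] (Fin 3 → k)),
      Function.Injective f → Function.Surjective g →
      LinearMap.range f = LinearMap.ker g →
      A ∘ₗ f = f ∘ₗ A₁ → B ∘ₗ f = f ∘ₗ B₁ → C ∘ₗ f = f ∘ₗ C₁ →
      g ∘ₗ A = A₁ ∘ₗ g → g ∘ₗ B = B₁ ∘ₗ g → g ∘ₗ C = C₁ ∘ₗ g →
      ∃ s : (Fin 3 → k) →ₗ[k] E, g ∘ₗ s = LinearMap.id ∧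
        A ∘ₗ s = s ∘ₗ A₁ ∧ B ∘ₗ s = s ∘ₗ B₁ ∧ C ∘ₗ s = s ∘ₗ C₁ := by
  intro A₁ B₁ C₁ f g hf hg hfg _ hBf hCf hgA hgB hgC
  have h : AnticommRelations A B C := ⟨hab, hac, hbc⟩
  have hexact : Function.Exact f g := LinearMap.exact_iff.mpr hfg.symm
  obtain ⟨v, hgv, hCv, hBv⟩ := h.exists_lift_highestWeight hc2 hf hg hexact hBf hCf hgB hgC
  have hA3 : A (A (A v)) = 0 := by
    refine eq_zero_of_apply_eq_zero_of_B_eq_zero_of_C_eq_zero hf hexact hBf hCf ?_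
      (h.B_A_A_A_eq_zero hCv hBv) (h.C_A_A_A_eq_zero hCv)
    have hgA' : ∀ x, g (A x) = A₁ (g x) := LinearMap.congr_fun hgA
    rw [hgA', hgA', hgA']
    exact V₁.A_A_A_eq_zero (g v)
  refine ⟨orbitMap A v, ?_, orbitMap_comp_A hA3, h.B_comp_orbitMap hCv hBv, h.C_comp_orbitMap hCv⟩
  rw [comp_orbitMap hgA, hgv]
  exact V₁.orbitMap_A_eq_id

/-- Ext¹(V₁,V₁) = 0 over u(m) (characteristic 2): every short exact sequence
0 → V₁ → E → V₁ → 0 of u(m)-modules splits, where V₁ is the 3-dimensional simple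
module given by the matrices A₁, B₁, C₁. -/
theorem um_ext_V1_V1_zero (k : Type*) [Field k] [IsAlgClosed k] [CharP k 2]
    (E : Type*) [AddCommGroup E] [Module k E] [FiniteDimensional k E]
    (A B C : Module.End k E)
    (hab : A*B + B*A = C) (hac : A*C + C*A = A) (hbc : B*C + C*B = B)
    (ha4 : A^4 = 0) (hb4 : B^4 = 0) (hc2 : C^2 = C) :
    let A₁ := Matrix.mulVecLin (!![0,0,0; 1,0,0; 0,1,0] : Matrix (Fin 3) (Fin 3) k)
    let B₁ := Matrix.mulVecLin (!![0,1,0; 0,0,1; 0,0,0] : Matrix (Fin 3) (Fin 3) k)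
    let C₁ := Matrix.mulVecLin (!![1,0,0; 0,0,0; 0,0,1] : Matrix (Fin 3) (Fin 3) k)
    ∀ (f : (Fin 3 → k) →ₗ[k] E) (g : E →ₗ[k] (Fin 3 → k)),
      Function.Injective f → Function.Surjective g →
      LinearMap.range f = LinearMap.ker g →
      A ∘ₗ f = f ∘ₗ A₁ → B ∘ₗ f = f ∘ₗ B₁ → C ∘ₗ f = f ∘ₗ C₁ →
      g ∘ₗ A = A₁ ∘ₗ g → g ∘ₗ B = B₁ ∘ₗ g → g ∘ₗ C = C₁ ∘ₗ g →
      ∃ s : (Fin 3 → k) →ₗ[k] E, g ∘ₗ s = LinearMap.id ∧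
        A ∘ₗ s = s ∘ₗ A₁ ∧ B ∘ₗ s = s ∘ₗ B₁ ∧ C ∘ₗ s = s ∘ₗ C₁ :=
  um_ext_V1_V1_zero_general k E A B C hab hac hbc hc2
end

section
/- Let k have characteristic 2 and U = u(m). The 3-dimensional simple module V₁ is self-dual: V₁* ≅ V₁ as U-modules, where the dual module structure uses the antipode-type map determined by a ↦ a, b ↦ b, c ↦ c on the opposite action (equivalently, x·φ = φ∘ρ(S(x)) with S the antipode of the restricted enveloping algebra, S(a)=a, S(b)=b, S(c)=c in characteristic 2). -/
/-!
`V₁` carries the nondegenerate bilinear form `⟨v, w⟩ = v₀w₂ + v₁w₁ + v₂w₀`, whose Gram matrix is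
the permutation matrix `J` of `i ↦ 2 - i`. A matrix `X` satisfies `Xᵀ J = J X`, i.e. acts
self-adjointly, exactly when it is symmetric about its antidiagonal, as the shifts `ρ(a)`, `ρ(b)`
and the diagonal `ρ(c)` are. Since `S` fixes the generators, `v ↦ ⟨v, -⟩` is then an isomorphism
`V₁ ≅ V₁*` of modules.
-/

open Matrix

theorem LinearMap.BilinForm.toDual_comp_of_isAdjointPair {K V : Type*} [Field K]
    [AddCommGroup V] [Module K V] [FiniteDimensional K V] {B : LinearMap.BilinForm K V}
    (hB : B.Nondegenerate) {f : V →ₗ[K] V} (hf : IsAdjointPair B B f f) (v : V) :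
    B.toDual hB (f v) = B.toDual hB v ∘ₗ f :=
  LinearMap.ext fun w => by simpa [toDual_def] using hf v w

namespace Matrix

variable {R n : Type*} [CommRing R] [Fintype n] [DecidableEq n]

theorem transpose_mul_permMatrix_eq_iff (σ : Equiv.Perm n) (X : Matrix n n R) :
    Xᵀ * σ.permMatrix R = σ.permMatrix R * X ↔ ∀ i j, X (σ.symm j) i = X (σ i) j := by
  rw [PEquiv.toMatrix_toPEquiv_mul, PEquiv.mul_toMatrix_toPEquiv, ← Matrix.ext_iff]
  rfl

theorem nondegenerate_toBilin'_permMatrix {K : Type*} [Field K] (σ : Equiv.Perm n) :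
    (σ.permMatrix K).toBilin'.Nondegenerate :=
  LinearMap.BilinForm.nondegenerate_toBilin'_of_det_ne_zero' _ <| by
    rw [det_permutation]
    rcases Int.units_eq_one_or (Equiv.Perm.sign σ) with h | h <;> simp [h]

end Matrix

theorem um_V1_self_dual_general (k : Type*) [Field k] :
    let A := Matrix.mulVecLin (!![0,0,0; 1,0,0; 0,1,0] : Matrix (Fin 3) (Fin 3) k)
    let B := Matrix.mulVecLin (!![0,1,0; 0,0,1; 0,0,0] : Matrix (Fin 3) (Fin 3) k)
    let C := Matrix.mulVecLin (!![1,0,0; 0,0,0; 0,0,1] : Matrix (Fin 3) (Fin 3) k)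
    ∃ T : (Fin 3 → k) ≃ₗ[k] Module.Dual k (Fin 3 → k),
      (∀ v, T (A v) = (T v) ∘ₗ A) ∧
      (∀ v, T (B v) = (T v) ∘ₗ B) ∧
      (∀ v, T (C v) = (T v) ∘ₗ C) := by
  intro A B C
  let J := (Fin.revPerm : Equiv.Perm (Fin 3)).permMatrix k
  have hJ : J.toBilin'.Nondegenerate := nondegenerate_toBilin'_permMatrix _
  have intertwines {X : Matrix (Fin 3) (Fin 3) k}
      (hX : ∀ i j, X (Fin.revPerm.symm j) i = X (Fin.revPerm i) j) :
      ∀ v, J.toBilin'.toDual hJ (X.mulVecLin v) = J.toBilin'.toDual hJ v ∘ₗ X.mulVecLin :=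
    J.toBilin'.toDual_comp_of_isAdjointPair hJ <|
      (isAdjointPair_toLinearMap₂' J J X X).2 <| (transpose_mul_permMatrix_eq_iff _ X).2 hX
  refine ⟨J.toBilin'.toDual hJ, intertwines ?_, intertwines ?_, intertwines ?_⟩ <;>
    · intro i j
      fin_cases i <;> fin_cases j <;> rfl

/-- The 3-dimensional simple u(m)-module V₁ is self-dual (characteristic 2):
there is a linear isomorphism T from V₁ to its dual intertwining the action,
where the dual action is x·φ = φ ∘ ρ(S(x)) with the antipode S fixing a, b, c. -/
theorem um_V1_self_dual (k : Type*) [Field k] [IsAlgClosed k] [CharP k 2] :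
    let A := Matrix.mulVecLin (!![0,0,0; 1,0,0; 0,1,0] : Matrix (Fin 3) (Fin 3) k)
    let B := Matrix.mulVecLin (!![0,1,0; 0,0,1; 0,0,0] : Matrix (Fin 3) (Fin 3) k)
    let C := Matrix.mulVecLin (!![1,0,0; 0,0,0; 0,0,1] : Matrix (Fin 3) (Fin 3) k)
    ∃ T : (Fin 3 → k) ≃ₗ[k] Module.Dual k (Fin 3 → k),
      (∀ v, T (A v) = (T v) ∘ₗ A) ∧
      (∀ v, T (B v) = (T v) ∘ₗ B) ∧
      (∀ v, T (C v) = (T v) ∘ₗ C) :=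
  um_V1_self_dual_general k
end
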